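/- Let I be an SMI instance in which every stable matching matches every man and every woman, let a be a positive integer, and let I_T be the truncated instance of I at rank a. Suppose M is a stable matching of I with d_U(M) = a, and suppose N is a stable matching of I_T that matches every man and every woman and is woman-optimal in I_T, i.e., for every stable matching M' of I_T and every woman w matched in M', rank(w, N(w)) ≤ rank(w, M'(w)). Then N is a stable matching of I, d_U(N) = a, and d_W(N) ≤ d_W(M). -/

import Mathlib

/-- An instance of the Stable Marriage problem with Incomplete lists (SMI):
men `U` and women `W`, each agent ranking a subset of the other side
in strict order of preference (represented as a duplicate-free list,
most-preferred first). -/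
structure SMI (U W : Type) where
  mpref : U → List W
  wpref : W → List U
  mpref_nodup : ∀ m, (mpref m).Nodup
  wpref_nodup : ∀ w, (wpref w).Nodup

namespace SMI

variable {U W : Type}

/-- The (1-based) rank of woman `w` on man `m`'s preference list. -/
def mrank [DecidableEq W] (I : SMI U W) (m : U) (w : W) : ℕ :=
  (I.mpref m).idxOf w + 1

/-- The (1-based) rank of man `m` on woman `w`'s preference list. -/
def wrank [DecidableEq U] (I : SMI U W) (w : W) (m : U) : ℕ :=
  (I.wpref w).idxOf m + 1

/-- `(m, w)` is an acceptable pair if each appears on the other's list. -/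
def Acceptable (I : SMI U W) (m : U) (w : W) : Prop :=
  w ∈ I.mpref m ∧ m ∈ I.wpref w

/-- A matching: a set of acceptable pairs in which every man and every
woman appears at most once. -/
def IsMatching (I : SMI U W) (M : Set (U × W)) : Prop :=
  (∀ p ∈ M, I.Acceptable p.1 p.2) ∧
  (∀ p ∈ M, ∀ q ∈ M, p.1 = q.1 → p = q) ∧
  (∀ p ∈ M, ∀ q ∈ M, p.2 = q.2 → p = q)

/-- Man `m` is matched in `M`. -/
def MMatched (M : Set (U × W)) (m : U) : Prop := ∃ w, (m, w) ∈ M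

/-- Woman `w` is matched in `M`. -/
def WMatched (M : Set (U × W)) (w : W) : Prop := ∃ m, (m, w) ∈ M

/-- `M` matches every man and every woman. -/
def Perfect (M : Set (U × W)) : Prop :=
  (∀ m : U, MMatched M m) ∧ (∀ w : W, WMatched M w)

/-- `(m, w)` is a blocking pair of `M`. -/
def Blocks [DecidableEq U] [DecidableEq W] (I : SMI U W) (M : Set (U × W))
    (m : U) (w : W) : Prop :=
  I.Acceptable m w ∧
  (¬ MMatched M m ∨ ∃ w', (m, w') ∈ M ∧ I.mrank m w < I.mrank m w') ∧
  (¬ WMatched M w ∨ ∃ m', (m', w) ∈ M ∧ I.wrank w m < I.wrank w m')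

/-- A stable matching: a matching admitting no blocking pair. -/
def IsStable [DecidableEq U] [DecidableEq W] (I : SMI U W) (M : Set (U × W)) : Prop :=
  I.IsMatching M ∧ ∀ m w, ¬ I.Blocks M m w

/-- The man-degree `d_U(M)`: the largest rank of any man in `M`. -/
noncomputable def dU [DecidableEq W] (I : SMI U W) (M : Set (U × W)) : ℕ :=
  sSup {r : ℕ | ∃ p ∈ M, r = I.mrank p.1 p.2}

/-- The woman-degree `d_W(M)`: the largest rank of any woman in `M`. -/
noncomputable def dW [DecidableEq U] (I : SMI U W) (M : Set (U × W)) : ℕ :=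
  sSup {r : ℕ | ∃ p ∈ M, r = I.wrank p.2 p.1}

/-- The regret-equality score `r(M) = |d_U(M) - d_W(M)|`. -/
noncomputable def rScore [DecidableEq U] [DecidableEq W] (I : SMI U W) (M : Set (U × W)) : ℕ :=
  ((I.dU M : ℤ) - (I.dW M : ℤ)).natAbs

/-- `M0` is a man-optimal and woman-pessimal stable matching of `I`. -/
def ManOptWomanPess [DecidableEq U] [DecidableEq W] (I : SMI U W)
    (M0 : Set (U × W)) : Prop :=
  I.IsStable M0 ∧ ∀ M, I.IsStable M →
    (∀ m w0 w, (m, w0) ∈ M0 → (m, w) ∈ M → I.mrank m w0 ≤ I.mrank m w) ∧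
    (∀ w m0 m, (m0, w) ∈ M0 → (m, w) ∈ M → I.wrank w m ≤ I.wrank w m0)

/-- `Mz` is a woman-optimal and man-pessimal stable matching of `I`. -/
def WomanOptManPess [DecidableEq U] [DecidableEq W] (I : SMI U W)
    (Mz : Set (U × W)) : Prop :=
  I.IsStable Mz ∧ ∀ M, I.IsStable M →
    (∀ w mz m, (mz, w) ∈ Mz → (m, w) ∈ M → I.wrank w mz ≤ I.wrank w m) ∧
    (∀ m wz w, (m, wz) ∈ Mz → (m, w) ∈ M → I.mrank m w ≤ I.mrank m wz)

/-- The truncated instance `I_T` of `I` at rank `a`: every pair `(m, w)` with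
`rank(m, w) > a` is deleted, i.e. each man's list is cut after his `a`-th
choice, and he is removed from the lists of the women thereby deleted. -/
def truncate [DecidableEq W] (I : SMI U W) (a : ℕ) : SMI U W where
  mpref m := (I.mpref m).take a
  wpref w := (I.wpref w).filter (fun m => decide (w ∈ (I.mpref m).take a))
  mpref_nodup m := ((I.mpref m).take_sublist a).nodup (I.mpref_nodup m)
  wpref_nodup w := (I.wpref_nodup w).filter _

end SMI

/-!
Truncating at `a = d_U(M)` keeps every pair of `M`, and `M` stays stable in `I_T`. Conversely, a
stable matching of `I_T` that matches every man is stable in `I`: a man who would block with `w`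
ranks `w` above his partner, hence among his first `a` choices, so the pair already blocks in
`I_T`. In `I_T` the woman-optimal matching `N` is man-pessimal, so every man does at least as
badly in `N` as in `M`, giving `d_U(N) ≥ d_U(M) = a` (and `d_U(N) ≤ a` by truncation), while
every woman does at least as well, giving `d_W(N) ≤ d_W(M)`.
-/

namespace List

variable {α : Type} [DecidableEq α]

theorem idxOf_take (l : List α) (n : ℕ) (x : α) :
    (l.take n).idxOf x = min (l.idxOf x) n := by
  induction l generalizing n with
  | nil => simp
  | cons b l ih => cases n <;> grind

theorem idxOf_filter_lt_idxOf_filter_iff {p : α → Bool} {x y : α} (hx : p x) (hy : p y)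
    (l : List α) : (l.filter p).idxOf x < (l.filter p).idxOf y ↔ l.idxOf x < l.idxOf y := by
  induction l with
  | nil => simp
  | cons b l ih => by_cases hb : p b <;> grind

end List

theorem bddAbove_setOf_exists_mem_eq {α : Type} [Finite α] (S : Set α) (f : α → ℕ) :
    BddAbove {r | ∃ p ∈ S, r = f p} :=
  ((Set.finite_range f).subset (by rintro _ ⟨p, -, rfl⟩; exact ⟨p, rfl⟩)).bddAbove

namespace SMI

variable {U W : Type}

def IsWomanOptimal [DecidableEq U] [DecidableEq W] (J : SMI U W) (N : Set (U × W)) : Prop :=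
  ∀ M' : Set (U × W), J.IsStable M' →
    ∀ (w : W) (m m' : U), (m, w) ∈ N → (m', w) ∈ M' → J.wrank w m ≤ J.wrank w m'

theorem wrank_inj [DecidableEq U] (J : SMI U W) {w : W} {m m' : U} (hm : m ∈ J.wpref w) :
    J.wrank w m = J.wrank w m' ↔ m = m' := by
  simp [wrank, List.idxOf_inj hm]

/-- Woman-optimal is man-pessimal: otherwise `m` and his partner in `N` block `M`. -/
theorem IsWomanOptimal.mrank_le [DecidableEq U] [DecidableEq W] {J : SMI U W}
    {N M : Set (U × W)} (hopt : J.IsWomanOptimal N) (hN : J.IsMatching N) (hM : J.IsStable M)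
    {m : U} {wN wM : W} (hmN : (m, wN) ∈ N) (hmM : (m, wM) ∈ M) :
    J.mrank m wM ≤ J.mrank m wN := by
  by_contra! hlt
  have hacc : J.Acceptable m wN := hN.1 _ hmN
  refine hM.2 m wN ⟨hacc, .inr ⟨wM, hmM, hlt⟩, ?_⟩
  by_cases hw : WMatched M wN
  · obtain ⟨m', hm'M⟩ := hw
    refine .inr ⟨m', hm'M, (hopt M hM wN m m' hmN hm'M).lt_of_ne fun heq => ?_⟩
    rw [J.wrank_inj hacc.2] at heq
    subst heq
    obtain rfl : wN = wM := congrArg Prod.snd (hM.1.2.1 _ hm'M _ hmM rfl)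
    exact hlt.false
  · exact .inl hw

section Truncate

variable [DecidableEq W] (I : SMI U W) (a : ℕ) {m m' : U} {w : W}

theorem mrank_truncate : (I.truncate a).mrank m w = min (I.mrank m w) (a + 1) := by
  simp only [mrank, truncate, List.idxOf_take]
  omega

theorem mrank_truncate_of_le (h : I.mrank m w ≤ a) : (I.truncate a).mrank m w = I.mrank m w := by
  rw [mrank_truncate]
  omega

theorem acceptable_truncate_iff :
    (I.truncate a).Acceptable m w ↔ I.Acceptable m w ∧ I.mrank m w ≤ a := by
  have hmem : w ∈ (I.mpref m).take a ↔ w ∈ I.mpref m ∧ I.mrank m w ≤ a := by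
    refine ⟨fun h => ?_, fun h => (List.mem_take_iff_idxOf_lt h.1).2 (by grind [mrank])⟩
    have hw := List.mem_of_mem_take h
    exact ⟨hw, by grind [mrank, List.mem_take_iff_idxOf_lt hw]⟩
  simp only [Acceptable, truncate, List.mem_filter, decide_eq_true_eq, hmem]
  tauto

theorem wrank_truncate_lt_iff [DecidableEq U] (hm : m ∈ (I.truncate a).wpref w)
    (hm' : m' ∈ (I.truncate a).wpref w) :
    (I.truncate a).wrank w m < (I.truncate a).wrank w m' ↔ I.wrank w m < I.wrank w m' := by
  simp only [truncate, List.mem_filter] at hm hm'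
  simp only [wrank, truncate, Nat.add_lt_add_iff_right]
  exact List.idxOf_filter_lt_idxOf_filter_iff (p := fun u => decide (w ∈ (I.mpref u).take a))
    hm.2 hm'.2 _

theorem wrank_truncate_le_iff [DecidableEq U] (hm : m ∈ (I.truncate a).wpref w)
    (hm' : m' ∈ (I.truncate a).wpref w) :
    (I.truncate a).wrank w m ≤ (I.truncate a).wrank w m' ↔ I.wrank w m ≤ I.wrank w m' := by
  simpa only [not_lt] using (I.wrank_truncate_lt_iff a hm' hm).not

variable [DecidableEq U] {I a} {M N : Set (U × W)}

theorem IsStable.truncate (hM : I.IsStable M) (hle : ∀ p ∈ M, I.mrank p.1 p.2 ≤ a) :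
    (I.truncate a).IsStable M := by
  have hacc (p) (hp : p ∈ M) : (I.truncate a).Acceptable p.1 p.2 :=
    (I.acceptable_truncate_iff a).2 ⟨hM.1.1 p hp, hle p hp⟩
  refine ⟨⟨hacc, hM.1.2⟩, fun m w ⟨hmw, hbm, hbw⟩ => hM.2 m w ⟨?_, ?_, ?_⟩⟩
  · exact ((I.acceptable_truncate_iff a).1 hmw).1
  · refine hbm.imp_right fun ⟨w', hw', hlt⟩ => ⟨w', hw', ?_⟩
    rw [mrank_truncate, mrank_truncate] at hlt
    omega
  · exact hbw.imp_right fun ⟨m', hm', hlt⟩ =>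
      ⟨m', hm', (I.wrank_truncate_lt_iff a hmw.2 (hacc _ hm').2).1 hlt⟩

theorem IsStable.of_truncate (hN : (I.truncate a).IsStable N) (hmen : ∀ m, MMatched N m) :
    I.IsStable N := by
  have hacc (p) (hp : p ∈ N) := (I.acceptable_truncate_iff a).1 (hN.1.1 p hp)
  refine ⟨⟨fun p hp => (hacc p hp).1, hN.1.2⟩, fun m w ⟨hmw, hbm, hbw⟩ => ?_⟩
  obtain ⟨w', hmw', hlt⟩ := hbm.resolve_left (not_not.2 (hmen m))
  have hw'a : I.mrank m w' ≤ a := (hacc _ hmw').2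
  have hmwT : (I.truncate a).Acceptable m w :=
    (I.acceptable_truncate_iff a).2 ⟨hmw, hlt.le.trans hw'a⟩
  refine hN.2 m w ⟨hmwT, .inr ⟨w', hmw', ?_⟩, ?_⟩
  · rw [mrank_truncate, mrank_truncate]
    omega
  · exact hbw.imp_right fun ⟨m', hm', hlt⟩ =>
      ⟨m', hm', (I.wrank_truncate_lt_iff a hmwT.2 (hN.1.1 _ hm').2).2 hlt⟩

end Truncate

section Degree

variable (I : SMI U W) {M : Set (U × W)} {r : ℕ}

theorem mrank_le_dU [DecidableEq W] [Finite U] [Finite W] {p : U × W} (hp : p ∈ M) :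
    I.mrank p.1 p.2 ≤ I.dU M :=
  le_csSup (bddAbove_setOf_exists_mem_eq M _) ⟨p, hp, rfl⟩

theorem dU_le [DecidableEq W] (h : ∀ p ∈ M, I.mrank p.1 p.2 ≤ r) : I.dU M ≤ r :=
  csSup_le' (by rintro _ ⟨p, hp, rfl⟩; exact h p hp)

theorem wrank_le_dW [DecidableEq U] [Finite U] [Finite W] {p : U × W} (hp : p ∈ M) :
    I.wrank p.2 p.1 ≤ I.dW M :=
  le_csSup (bddAbove_setOf_exists_mem_eq M _) ⟨p, hp, rfl⟩

theorem dW_le [DecidableEq U] (h : ∀ p ∈ M, I.wrank p.2 p.1 ≤ r) : I.dW M ≤ r :=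
  csSup_le' (by rintro _ ⟨p, hp, rfl⟩; exact h p hp)

end Degree

end SMI

theorem stmt_8_general {U W : Type} [Fintype U] [Fintype W] [DecidableEq U] [DecidableEq W]
    (I : SMI U W)
    (hperf : ∀ M : Set (U × W), I.IsStable M → SMI.Perfect M)
    (a : ℕ)
    (M : Set (U × W)) (hM : I.IsStable M) (hdU : I.dU M = a)
    (N : Set (U × W)) (hN : (I.truncate a).IsStable N) (hNp : SMI.Perfect N)
    (hNopt : ∀ M' : Set (U × W), (I.truncate a).IsStable M' →
      ∀ (w : W) (m m' : U), (m, w) ∈ N → (m', w) ∈ M' →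
        (I.truncate a).wrank w m ≤ (I.truncate a).wrank w m') :
    I.IsStable N ∧ I.dU N = a ∧ I.dW N ≤ I.dW M := by
  have hMa : ∀ p ∈ M, I.mrank p.1 p.2 ≤ a := fun p hp => hdU ▸ I.mrank_le_dU hp
  have hNa : ∀ p ∈ N, I.mrank p.1 p.2 ≤ a := fun p hp =>
    ((I.acceptable_truncate_iff a).1 (hN.1.1 p hp)).2
  have hMT : (I.truncate a).IsStable M := hM.truncate hMa
  refine ⟨hN.of_truncate hNp.1, le_antisymm (I.dU_le hNa) ?_, I.dW_le fun ⟨m, w⟩ hmN => ?_⟩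
  · refine hdU ▸ I.dU_le fun ⟨m, wM⟩ hmM => ?_
    obtain ⟨wN, hmN⟩ := hNp.1 m
    have hpess := SMI.IsWomanOptimal.mrank_le hNopt hN.1 hMT hmN hmM
    rw [I.mrank_truncate_of_le a (hMa _ hmM), I.mrank_truncate_of_le a (hNa _ hmN)] at hpess
    exact hpess.trans (I.mrank_le_dU hmN)
  · obtain ⟨m', hm'M⟩ := (hperf M hM).2 w
    have hopt := hNopt M hMT w m m' hmN hm'M
    rw [I.wrank_truncate_le_iff a (hN.1.1 _ hmN).2 (hMT.1.1 _ hm'M).2] at hopt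
    exact hopt.trans (I.wrank_le_dW hm'M)

/-- If `M` is a stable matching of `I` with `d_U(M) = a` and `N` is a
woman-optimal stable matching of the truncated instance `I_T` matching
everyone, then `N` is stable in `I` with `d_U(N) = a` and `d_W(N) ≤ d_W(M)`. -/
theorem stmt_8 {U W : Type} [Fintype U] [Fintype W] [DecidableEq U] [DecidableEq W]
    (I : SMI U W)
    (hperf : ∀ M : Set (U × W), I.IsStable M → SMI.Perfect M)
    (a : ℕ) (ha : 0 < a)
    (M : Set (U × W)) (hM : I.IsStable M) (hdU : I.dU M = a)
    (N : Set (U × W)) (hN : (I.truncate a).IsStable N) (hNp : SMI.Perfect N)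
    (hNopt : ∀ M' : Set (U × W), (I.truncate a).IsStable M' →
      ∀ (w : W) (m m' : U), (m, w) ∈ N → (m', w) ∈ M' →
        (I.truncate a).wrank w m ≤ (I.truncate a).wrank w m') :
    I.IsStable N ∧ I.dU N = a ∧ I.dW N ≤ I.dW M :=
  stmt_8_general I hperf a M hM hdU N hN hNp hNopt
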